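/- Suppose there exist h > 0 and ε > 0 such that S_h'(ε) < +∞. Then lim_{n→∞} ∫_{nh}^{(n+1)h} ‖σ(s)‖_F² ds = 0, and consequently lim_{t→∞} (1/t) ∫_0^t ‖σ(s)‖_F² ds = 0. -/

import Mathlib

open MeasureTheory Filter

/-- The squared Frobenius norm of `σ(s)`. -/
noncomputable def F2 {d r : ℕ} (σ : ℝ → Matrix (Fin d) (Fin r) ℝ) (s : ℝ) : ℝ :=
  ∑ i : Fin d, ∑ j : Fin r, (σ s i j) ^ 2

/-- `θ_h(n)² = ∫_{nh}^{(n+1)h} ‖σ(s)‖_F² ds`. -/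
noncomputable def theta2 {d r : ℕ} (σ : ℝ → Matrix (Fin d) (Fin r) ℝ) (h : ℝ) (n : ℕ) : ℝ :=
  ∫ s in ((n : ℝ) * h)..(((n : ℝ) + 1) * h), F2 σ s

/-- The `n`-th summand of `S_h'(ε)`, taken to be `0` when `θ_h(n) = 0`. -/
noncomputable def Sterm {d r : ℕ} (σ : ℝ → Matrix (Fin d) (Fin r) ℝ) (h ε : ℝ) (n : ℕ) : ℝ :=
  if theta2 σ h n = 0 then 0
  else Real.sqrt (theta2 σ h n) * Real.exp (-(ε ^ 2) / (2 * theta2 σ h n))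

/-- `S_h'(ε) = ∑_{n=1}^∞ θ_h(n) exp(-ε²/(2θ_h(n)²)) < +∞`.
Since all summands are nonnegative, finiteness is expressed as summability. -/
def SFinite {d r : ℕ} (σ : ℝ → Matrix (Fin d) (Fin r) ℝ) (h ε : ℝ) : Prop :=
  Summable fun n : ℕ => Sterm σ h ε (n + 1)

/-!
The summands of `S_h'(ε)` are `φ(θ_h(n)²)` with `φ(x) = √x · exp(-ε²/(2x))` increasing and
positive on `(0, ∞)`, so they tend to zero only if the block integrals `θ_h(n)²` do.
For `t ∈ [Nh, (N+1)h)` with `N ≥ 1`, nonnegativity of the integrand gives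
`(1/t) ∫_0^t ≤ (2/h) · (1/(N+1)) ∑_{n ≤ N} θ_h(n)²`, a Cesàro mean of a null sequence.
-/

open Topology

section BlockIntegrals

variable {f : ℝ → ℝ} {h : ℝ}

lemma sum_blockIntegral_eq (hf : ∀ t, 0 ≤ t → IntervalIntegrable f volume 0 t) (hh : 0 ≤ h)
    (N : ℕ) :
    ∑ n ∈ Finset.range N, ∫ s in ((n : ℝ) * h)..(((n : ℝ) + 1) * h), f s =
      ∫ s in (0 : ℝ)..(N * h), f s := by
  have hint : ∀ k < N, IntervalIntegrable f volume ((k : ℝ) * h) (((k + 1 : ℕ) : ℝ) * h) :=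
    fun k _ => (hf _ (by positivity)).symm.trans (hf _ (by positivity))
  simpa using intervalIntegral.sum_integral_adjacent_intervals hint

lemma integral_le_sum_blockIntegral (hf : ∀ t, 0 ≤ t → IntervalIntegrable f volume 0 t)
    (hf₀ : ∀ s, 0 ≤ s → 0 ≤ f s) (hh : 0 < h) {t : ℝ} (ht : 0 ≤ t) :
    ∫ s in (0 : ℝ)..t, f s ≤
      ∑ n ∈ Finset.range (⌊t / h⌋₊ + 1), ∫ s in ((n : ℝ) * h)..(((n : ℝ) + 1) * h), f s := by
  have hlt : t < ((⌊t / h⌋₊ + 1 : ℕ) : ℝ) * h := by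
    rw [← div_lt_iff₀ hh]; exact_mod_cast Nat.lt_floor_add_one (t / h)
  rw [sum_blockIntegral_eq hf hh.le]
  exact intervalIntegral.integral_mono_interval le_rfl ht hlt.le
    (ae_restrict_of_forall_mem measurableSet_Ioc fun s hs => hf₀ s hs.1.le)
    (hf _ (by positivity))

lemma average_integral_le (hf : ∀ t, 0 ≤ t → IntervalIntegrable f volume 0 t)
    (hf₀ : ∀ s, 0 ≤ s → 0 ≤ f s) (hh : 0 < h) {t : ℝ} (ht : h ≤ t) :
    1 / t * ∫ s in (0 : ℝ)..t, f s ≤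
      2 / h * (((⌊t / h⌋₊ + 1 : ℕ) : ℝ)⁻¹ *
        ∑ n ∈ Finset.range (⌊t / h⌋₊ + 1), ∫ s in ((n : ℝ) * h)..(((n : ℝ) + 1) * h), f s) := by
  set N := ⌊t / h⌋₊
  have ht₀ : 0 < t := hh.trans_le ht
  have hN : 1 ≤ N := Nat.one_le_floor_iff _ |>.mpr ((one_le_div hh).mpr ht)
  have hNt : (N : ℝ) * h ≤ t := (le_div_iff₀ hh).mp (Nat.floor_le (by positivity))
  have hN' : ((N + 1 : ℕ) : ℝ) * h ≤ 2 * t := by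
    have : (1 : ℝ) ≤ N := by exact_mod_cast hN
    push_cast; nlinarith
  have hI₀ : 0 ≤ ∫ s in (0 : ℝ)..t, f s :=
    intervalIntegral.integral_nonneg ht₀.le fun s hs => hf₀ s hs.1
  calc 1 / t * ∫ s in (0 : ℝ)..t, f s
      ≤ 2 / (((N + 1 : ℕ) : ℝ) * h) * ∫ s in (0 : ℝ)..t, f s := by
        gcongr ?_ * _
        rw [div_le_div_iff₀ ht₀ (by positivity)]; linarith
    _ ≤ 2 / (((N + 1 : ℕ) : ℝ) * h) * ∑ n ∈ Finset.range (N + 1),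
          ∫ s in ((n : ℝ) * h)..(((n : ℝ) + 1) * h), f s := by
        gcongr; exact integral_le_sum_blockIntegral hf hf₀ hh ht₀.le
    _ = _ := by field_simp

theorem tendsto_average_integral_of_tendsto_blockIntegral
    (hf : ∀ t, 0 ≤ t → IntervalIntegrable f volume 0 t) (hf₀ : ∀ s, 0 ≤ s → 0 ≤ f s)
    (hh : 0 < h)
    (hblock : Tendsto (fun n : ℕ => ∫ s in ((n : ℝ) * h)..(((n : ℝ) + 1) * h), f s) atTop (𝓝 0)) :
    Tendsto (fun t : ℝ => 1 / t * ∫ s in (0 : ℝ)..t, f s) atTop (𝓝 0) := by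
  have hindex : Tendsto (fun t : ℝ => ⌊t / h⌋₊ + 1) atTop atTop :=
    tendsto_add_atTop_nat 1 |>.comp <| tendsto_nat_floor_atTop.comp <|
      tendsto_id.atTop_div_const hh
  have hbound := (hblock.cesaro.comp hindex).const_mul (2 / h)
  rw [mul_zero] at hbound
  refine squeeze_zero' ?_ ?_ hbound
  · filter_upwards [eventually_gt_atTop 0] with t ht
    have : 0 ≤ ∫ s in (0 : ℝ)..t, f s :=
      intervalIntegral.integral_nonneg ht.le fun s hs => hf₀ s hs.1
    positivity
  · filter_upwards [eventually_ge_atTop h] with t ht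
    exact average_integral_le hf hf₀ hh ht

end BlockIntegrals

section Frobenius

variable {d r : ℕ} {σ : ℝ → Matrix (Fin d) (Fin r) ℝ} {h ε : ℝ}

lemma F2_nonneg (s : ℝ) : 0 ≤ F2 σ s := by
  unfold F2; positivity

lemma continuousOn_F2 (hσ : ContinuousOn σ (Set.Ici 0)) : ContinuousOn (F2 σ) (Set.Ici 0) := by
  unfold F2; fun_prop

lemma theta2_nonneg (hh : 0 ≤ h) (n : ℕ) : 0 ≤ theta2 σ h n :=
  intervalIntegral.integral_nonneg (by gcongr; linarith) fun s _ => F2_nonneg s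

lemma sqrt_mul_exp_le_Sterm {δ : ℝ} (hδ : 0 < δ) {n : ℕ} (hθ : δ ≤ theta2 σ h n) :
    Real.sqrt δ * Real.exp (-(ε ^ 2) / (2 * δ)) ≤ Sterm σ h ε n := by
  rw [Sterm, if_neg (hδ.trans_le hθ).ne']
  gcongr ?_ * Real.exp ?_
  · exact Real.sqrt_le_sqrt hθ
  · rw [neg_div, neg_div, neg_le_neg_iff]
    gcongr

lemma tendsto_theta2_zero (hh : 0 ≤ h) (hS : SFinite σ h ε) :
    Tendsto (theta2 σ h) atTop (𝓝 0) := by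
  rw [← tendsto_add_atTop_iff_nat 1]
  refine tendsto_order.2 ⟨fun a ha => .of_forall fun n => ha.trans_le (theta2_nonneg hh _),
    fun δ hδ => ?_⟩
  filter_upwards [(tendsto_order.1 hS.tendsto_atTop_zero).2
    (Real.sqrt δ * Real.exp (-(ε ^ 2) / (2 * δ))) (by positivity)] with n hn
  by_contra! hθ
  exact (sqrt_mul_exp_le_Sterm hδ hθ).not_gt hn

end Frobenius

theorem stmt_4_general (d r : ℕ)
    (σ : ℝ → Matrix (Fin d) (Fin r) ℝ) (hσ : ContinuousOn σ (Set.Ici 0))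
    (h ε : ℝ) (hh : 0 < h) (hS : SFinite σ h ε) :
    Tendsto (fun n : ℕ => theta2 σ h n) atTop (nhds 0) ∧
    Tendsto (fun t : ℝ => (1 / t) * ∫ s in (0 : ℝ)..t, F2 σ s) atTop (nhds 0) := by
  have hθ := tendsto_theta2_zero hh.le hS
  refine ⟨hθ, tendsto_average_integral_of_tendsto_blockIntegral ?_ (fun s _ => F2_nonneg s) hh hθ⟩
  intro t ht
  exact ((continuousOn_F2 hσ).mono fun s hs => (Set.uIcc_of_le ht ▸ hs).1).intervalIntegrable

theorem stmt_4 (d r : ℕ) (hd : 1 ≤ d) (hr : 1 ≤ r)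
    (σ : ℝ → Matrix (Fin d) (Fin r) ℝ) (hσ : ContinuousOn σ (Set.Ici 0))
    (h ε : ℝ) (hh : 0 < h) (hε : 0 < ε) (hS : SFinite σ h ε) :
    Tendsto (fun n : ℕ => theta2 σ h n) atTop (nhds 0) ∧
    Tendsto (fun t : ℝ => (1 / t) * ∫ s in (0 : ℝ)..t, F2 σ s) atTop (nhds 0) :=
  stmt_4_general d r σ hσ h ε hh hS
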